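/- arXiv:2308.16613 — 3 statements merged into one kernel-verified Lean document; each statement's English description precedes it below -/
import Mathlib

section
/- For nonnegative integers j and an entire function f on ℂ of at most exponential type (i.e., |f(z)| ≤ C e^{c|z|} for some constants), one has (1/π) ∫_ℂ conj(z)^j f(z) e^{conj(z)·ζ + z·conj(ζ) - |z|²} dV(z) = ∂_ζ^j [f(ζ) e^{|ζ|²}] for every ζ ∈ ℂ. -/
open MeasureTheory Complex ComplexConjugate
open Real Set Metric

/-!
After the substitution `z = w + ζ` the weight becomes `e^{|ζ|²} e^{-|w|²}`, and the binomial
expansion of `conj (w + ζ) ^ j` reduces the integral to the Gaussian moments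
`∫ conj w ^ k g(w) e^{-|w|²} dV` of the entire function `g = f (· + ζ)`, which still has
exponential type. In polar coordinates, `conj w = r² / w` on the circle `|w| = r`, so Cauchy's
formula gives the angular average `r^{2k} e^{-r²} g⁽ᵏ⁾(0) / k!`, and the radial integral
`∫₀^∞ 2π r^{2k+1} e^{-r²} dr = π k!` leaves `π g⁽ᵏ⁾(0) = π f⁽ᵏ⁾(ζ)`. The Leibniz rule expands
the right-hand side into the same binomial sum.
-/

theorem pow_mul_exp_mul_sub_sq_le (k : ℕ) (c : ℝ) {r : ℝ} (hr : 0 ≤ r) :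
    r ^ k * rexp (c * r - r ^ 2)
      ≤ k.factorial * rexp ((c + 1) ^ 2 / 2) * rexp (-(1 / 2) * r ^ 2) := by
  have hpow : r ^ k ≤ k.factorial * rexp r := by
    have := Real.pow_div_factorial_le_exp r hr k
    rwa [div_le_iff₀ (by positivity), mul_comm] at this
  have hsq : r + (c * r - r ^ 2) ≤ (c + 1) ^ 2 / 2 + -(1 / 2) * r ^ 2 := by
    nlinarith [sq_nonneg (r - (c + 1))]
  calc r ^ k * rexp (c * r - r ^ 2)
      ≤ k.factorial * rexp r * rexp (c * r - r ^ 2) := by gcongr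
    _ = k.factorial * rexp (r + (c * r - r ^ 2)) := by rw [Real.exp_add]; ring
    _ ≤ k.factorial * rexp ((c + 1) ^ 2 / 2 + -(1 / 2) * r ^ 2) := by gcongr
    _ = _ := by rw [Real.exp_add]; ring

theorem integrable_exp_neg_mul_sq_norm {V : Type*} [NormedAddCommGroup V] [InnerProductSpace ℝ V]
    [FiniteDimensional ℝ V] [MeasurableSpace V] [BorelSpace V] {b : ℝ} (hb : 0 < b) :
    Integrable (fun v : V => rexp (-b * ‖v‖ ^ 2)) := by
  refine (GaussianFourier.integrable_cexp_neg_mul_sq_norm_add (V := V) (b := b) (by simpa) 0 0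
    ).norm.congr (Filter.Eventually.of_forall fun v => ?_)
  simp only [zero_mul, add_zero, Complex.norm_exp]
  norm_cast

theorem integrable_conj_pow_mul_mul_cexp_neg_sq {g : ℂ → ℂ} (hg : Continuous g) {C c : ℝ}
    (hgrow : ∀ z, ‖g z‖ ≤ C * rexp (c * ‖z‖)) (k : ℕ) :
    Integrable (fun w : ℂ => conj w ^ k * g w * cexp (-(‖w‖ : ℂ) ^ 2)) := by
  refine ((integrable_exp_neg_mul_sq_norm (V := ℂ) (b := 1 / 2) (by norm_num)).const_mul
    (C * k.factorial * rexp ((c + 1) ^ 2 / 2))).mono' (by fun_prop)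
    (Filter.Eventually.of_forall fun w => ?_)
  have hC : 0 ≤ C := (norm_nonneg _).trans ((hgrow 0).trans (by simp))
  calc ‖conj w ^ k * g w * cexp (-(‖w‖ : ℂ) ^ 2)‖
      = ‖w‖ ^ k * ‖g w‖ * rexp (-‖w‖ ^ 2) := by
        simp [Complex.norm_exp, ← ofReal_pow]
    _ ≤ ‖w‖ ^ k * (C * rexp (c * ‖w‖)) * rexp (-‖w‖ ^ 2) := by gcongr; exact hgrow w
    _ = C * (‖w‖ ^ k * rexp (c * ‖w‖ - ‖w‖ ^ 2)) := by
        rw [sub_eq_add_neg, Real.exp_add]; ring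
    _ ≤ C * (k.factorial * rexp ((c + 1) ^ 2 / 2) * rexp (-(1 / 2) * ‖w‖ ^ 2)) :=
        mul_le_mul_of_nonneg_left (pow_mul_exp_mul_sub_sq_le k c (norm_nonneg w)) hC
    _ = _ := by ring

theorem integral_Ioi_pow_mul_exp_neg_sq (k : ℕ) :
    ∫ r in Ioi (0 : ℝ), r ^ (2 * k + 1) * rexp (-r ^ 2) = k.factorial / 2 := by
  have h := _root_.integral_rpow_mul_exp_neg_rpow (p := 2) (q := 2 * k + 1) two_pos
    (by linarith [k.cast_nonneg (α := ℝ)])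
  rw [show (2 * (k : ℝ) + 1 + 1) / 2 = k + 1 by ring, Real.Gamma_nat_eq_factorial,
    one_div_mul_eq_div] at h
  rw [← h]
  refine setIntegral_congr_fun measurableSet_Ioi fun r _ => ?_
  norm_cast

theorem Complex.integral_eq_integral_Ioi_smul_circleAverage {E : Type*} [NormedAddCommGroup E]
    [NormedSpace ℝ E] {F : ℂ → E} (hFc : Continuous F) (hF : Integrable F) :
    ∫ z, F z = ∫ r in Ioi (0 : ℝ), (2 * π * r) • circleAverage F 0 r := by
  have hsymm : ∀ p : ℝ × ℝ, Complex.polarCoord.symm p = circleMap 0 p.1 p.2 := by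
    intro p
    simp [circleMap, Complex.exp_mul_I]
  have hint : IntegrableOn (fun p : ℝ × ℝ => p.1 • F (circleMap 0 p.1 p.2))
      (Ioi 0 ×ˢ Ioo (-π) π) := by
    refine ⟨by fun_prop, ?_⟩
    calc ∫⁻ p in Ioi 0 ×ˢ Ioo (-π) π, ‖p.1 • F (circleMap 0 p.1 p.2)‖ₑ
        = ∫⁻ p in polarCoord.target, ENNReal.ofReal p.1 • ‖F (Complex.polarCoord.symm p)‖ₑ := by
          refine setLIntegral_congr_fun (measurableSet_Ioi.prod measurableSet_Ioo) fun p hp => ?_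
          rw [enorm_smul, Real.enorm_of_nonneg hp.1.le, hsymm, smul_eq_mul]
      _ = ∫⁻ z, ‖F z‖ₑ := Complex.lintegral_comp_polarCoord_symm (fun z => ‖F z‖ₑ)
      _ < ⊤ := hF.2
  rw [← Complex.integral_comp_polarCoord_symm, polarCoord_target]
  simp_rw [hsymm]
  rw [Measure.volume_eq_prod, setIntegral_prod _ hint]
  refine setIntegral_congr_fun measurableSet_Ioi fun r _ => ?_
  have hper : Function.Periodic (fun θ => F (circleMap 0 r θ)) (2 * π) :=
    fun θ => by simp [periodic_circleMap 0 r θ]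
  have hshift : ∫ θ in -π..π, F (circleMap 0 r θ) = ∫ θ in 0..2 * π, F (circleMap 0 r θ) := by
    simpa [show -π + 2 * π = π by ring] using hper.intervalIntegral_add_eq (-π) 0
  rw [integral_smul, ← integral_Ioc_eq_integral_Ioo,
    ← intervalIntegral.integral_of_le (by linarith [pi_pos]), hshift, circleAverage_def, smul_smul]
  congr 1
  field_simp

theorem circleAverage_inv_sub_pow_mul {h : ℂ → ℂ} {c : ℂ} {R : ℝ}
    (hh : DifferentiableOn ℂ h (closedBall c R)) (hR : 0 < R) (k : ℕ) :
    circleAverage (fun z => ((z - c) ^ k)⁻¹ * h z) c R = iteratedDeriv k h c / k.factorial := by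
  rw [circleAverage_eq_circleIntegral hR.ne']
  have hfun : (fun z => (z - c)⁻¹ • (((z - c) ^ k)⁻¹ * h z))
      = fun z => (1 / (z - c) ^ (k + 1)) • h z := by
    funext z
    simp only [smul_eq_mul, pow_succ, one_div, mul_inv]
    ring
  rw [hfun, hh.circleIntegral_one_div_sub_center_pow_smul hR k, smul_eq_mul, smul_eq_mul]
  field_simp

theorem circleAverage_conj_pow_mul_mul_cexp_neg_sq {h : ℂ → ℂ} (hh : Differentiable ℂ h) {r : ℝ}
    (hr : 0 < r) (k : ℕ) :
    circleAverage (fun w => conj w ^ k * h w * cexp (-(‖w‖ : ℂ) ^ 2)) 0 r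
      = ((r ^ (2 * k) * rexp (-r ^ 2) : ℝ) : ℂ) * (iteratedDeriv k h 0 / k.factorial) := by
  have hsphere : EqOn (fun w => conj w ^ k * h w * cexp (-(‖w‖ : ℂ) ^ 2))
      (fun w => ((r ^ (2 * k) * rexp (-r ^ 2) : ℝ) : ℂ) • (((w - 0) ^ k)⁻¹ * h w))
      (sphere 0 |r|) := by
    intro w hw
    rw [abs_of_pos hr, mem_sphere_zero_iff_norm] at hw
    have hw0 : w ≠ 0 := norm_pos_iff.mp (hw ▸ hr)
    have hconj : conj w = (r : ℂ) ^ 2 / w := by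
      rw [eq_div_iff hw0, mul_comm, mul_conj, normSq_eq_norm_sq, hw]
      push_cast
      ring
    simp only [hconj, hw, sub_zero, smul_eq_mul]
    push_cast
    rw [div_pow, div_eq_mul_inv, ← pow_mul]
    ring
  rw [circleAverage_congr_sphere hsphere, circleAverage_fun_smul,
    circleAverage_inv_sub_pow_mul hh.differentiableOn hr, smul_eq_mul]

theorem integral_conj_pow_mul_mul_cexp_neg_sq {h : ℂ → ℂ} (hh : Differentiable ℂ h) {C c : ℝ}
    (hgrow : ∀ z, ‖h z‖ ≤ C * rexp (c * ‖z‖)) (k : ℕ) :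
    ∫ w : ℂ, conj w ^ k * h w * cexp (-(‖w‖ : ℂ) ^ 2) = π * iteratedDeriv k h 0 := by
  rw [Complex.integral_eq_integral_Ioi_smul_circleAverage (by have := hh.continuous; fun_prop)
    (integrable_conj_pow_mul_mul_cexp_neg_sq hh.continuous hgrow k)]
  calc ∫ r in Ioi (0 : ℝ), (2 * π * r) • circleAverage
        (fun w => conj w ^ k * h w * cexp (-(‖w‖ : ℂ) ^ 2)) 0 r
      = ∫ r in Ioi (0 : ℝ), ((r ^ (2 * k + 1) * rexp (-r ^ 2) : ℝ) : ℂ)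
          * (2 * π * (iteratedDeriv k h 0 / k.factorial)) := by
        refine setIntegral_congr_fun measurableSet_Ioi fun r hr => ?_
        rw [circleAverage_conj_pow_mul_mul_cexp_neg_sq hh hr, real_smul]
        push_cast
        ring
    _ = ((∫ r in Ioi (0 : ℝ), r ^ (2 * k + 1) * rexp (-r ^ 2) : ℝ) : ℂ)
          * (2 * π * (iteratedDeriv k h 0 / k.factorial)) := by
        rw [integral_mul_const, integral_complex_ofReal]
    _ = π * iteratedDeriv k h 0 := by
        rw [integral_Ioi_pow_mul_exp_neg_sq]
        have hk : (k.factorial : ℂ) ≠ 0 := mod_cast k.factorial_ne_zero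
        push_cast
        field_simp

theorem norm_comp_add_le_mul_exp {E F : Type*} [SeminormedAddCommGroup E]
    [SeminormedAddCommGroup F] {f : E → F} {C c : ℝ} (hgrow : ∀ z, ‖f z‖ ≤ C * rexp (c * ‖z‖))
    (ζ w : E) :
    ‖f (w + ζ)‖ ≤ C * rexp (|c| * ‖ζ‖) * rexp (|c| * ‖w‖) := by
  have hC : 0 ≤ C := (norm_nonneg _).trans ((hgrow 0).trans (by simp))
  have hexponent : c * ‖w + ζ‖ ≤ |c| * ‖w‖ + |c| * ‖ζ‖ := by
    rw [← mul_add]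
    exact (mul_le_mul_of_nonneg_right (le_abs_self c) (norm_nonneg _)).trans
      (mul_le_mul_of_nonneg_left (norm_add_le w ζ) (abs_nonneg c))
  calc ‖f (w + ζ)‖ ≤ C * rexp (c * ‖w + ζ‖) := hgrow _
    _ ≤ C * rexp (|c| * ‖w‖ + |c| * ‖ζ‖) := by gcongr
    _ = C * rexp (|c| * ‖ζ‖) * rexp (|c| * ‖w‖) := by rw [Real.exp_add]; ring

theorem conj_pow_mul_mul_cexp_eq_sum (w ζ a : ℂ) (j : ℕ) :
    conj (w + ζ) ^ j * a * cexp (conj (w + ζ) * ζ + (w + ζ) * conj ζ - (‖w + ζ‖ : ℂ) ^ 2)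
      = ∑ k ∈ Finset.range (j + 1), cexp (ζ * conj ζ) * j.choose k * conj ζ ^ (j - k)
          * (conj w ^ k * a * cexp (-(‖w‖ : ℂ) ^ 2)) := by
  have hexponent : conj (w + ζ) * ζ + (w + ζ) * conj ζ - (‖w + ζ‖ : ℂ) ^ 2
      = ζ * conj ζ + -(‖w‖ : ℂ) ^ 2 := by
    simp only [← mul_conj', map_add]
    ring
  rw [hexponent, Complex.exp_add, map_add, add_pow, Finset.sum_mul, Finset.sum_mul]
  refine Finset.sum_congr rfl fun k _ => ?_
  ring

theorem iteratedDeriv_mul_cexp_mul_const {f : ℂ → ℂ} (hf : Differentiable ℂ f) (a : ℂ) (j : ℕ)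
    (ζ : ℂ) :
    iteratedDeriv j (fun ξ => f ξ * cexp (ξ * a)) ζ
      = ∑ k ∈ Finset.range (j + 1),
          j.choose k * iteratedDeriv k f ζ * a ^ (j - k) * cexp (ζ * a) := by
  have hexp : ∀ n, iteratedDeriv n (fun ξ => cexp (ξ * a)) ζ = a ^ n * cexp (ζ * a) := by
    intro n
    simp_rw [mul_comm _ a, iteratedDeriv_cexp_const_mul]
  rw [iteratedDeriv_fun_mul hf.contDiff.contDiffAt (by fun_prop)]
  simp_rw [hexp, mul_assoc]

theorem stmt_2 (j : ℕ) (f : ℂ → ℂ) (hf : Differentiable ℂ f)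
    (hgrow : ∃ C c : ℝ, ∀ z : ℂ, ‖f z‖ ≤ C * Real.exp (c * ‖z‖)) (ζ : ℂ) :
    (1 / (Real.pi : ℂ)) *
        (∫ z : ℂ, (conj z) ^ j * f z *
          Complex.exp (conj z * ζ + z * conj ζ - (‖z‖ : ℂ) ^ 2))
      = iteratedDeriv j (fun ξ : ℂ => f ξ * Complex.exp (ξ * conj ζ)) ζ := by
  obtain ⟨C, c, hgrow⟩ := hgrow
  have hfζ : Differentiable ℂ (fun w => f (w + ζ)) := hf.comp (differentiable_id.add_const ζ)
  have hgrowζ := norm_comp_add_le_mul_exp hgrow ζ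
  rw [← integral_add_right_eq_self _ ζ]
  simp_rw [conj_pow_mul_mul_cexp_eq_sum]
  rw [integral_finsetSum _ fun k _ =>
      (integrable_conj_pow_mul_mul_cexp_neg_sq hfζ.continuous hgrowζ k).const_mul _,
    iteratedDeriv_mul_cexp_mul_const hf, Finset.mul_sum]
  refine Finset.sum_congr rfl fun k _ => ?_
  rw [integral_const_mul, integral_conj_pow_mul_mul_cexp_neg_sq hfζ hgrowζ]
  simp only [iteratedDeriv_comp_add_const, zero_add]
  field_simp
end

section
/- In ℂ² let p(z₁,z₂) = z₁, f(z) = e^{2πi z₂}, g(z) = e^{z₂}. Then for every monomial z^α = z₁^{α₁} z₂^{α₂}, T_{p f conj(g)} z^α = p(z) f(z) (z + e₂)^α and T_{conj(g)} z^α = (z + e₂)^α, where e₂ = (0,1); consequently T_{pf} T_{conj(g)} z^α = T_{p f conj(g)} z^α for all multi-indices α. -/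
open MeasureTheory Complex ComplexConjugate

/-- Toeplitz operator on the Fock space over `ℂ²`, acting via the Gaussian integral. -/
noncomputable def toeplitz2 (φ u : ℂ × ℂ → ℂ) (w : ℂ × ℂ) : ℂ :=
  ∫ z : ℂ × ℂ, φ z * u z * Complex.exp (w.1 * conj z.1 + w.2 * conj z.2) *
    (((Real.pi ^ 2)⁻¹ * Real.exp (-(‖z.1‖ ^ 2 + ‖z.2‖ ^ 2)) : ℝ) : ℂ)

/-! The Gaussian weight on `ℂ²` splits, so a Toeplitz integral with separable integrand is a
product of two one-variable integrals `π⁻¹ ∫ p(z) e^{az + b z̄ - |z|²} dz = p(b) e^{ab}`.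
For `p = 1` this is a Gaussian integral with completed square, and for `p = zᵐ` it follows by
differentiating in `a`. The anti-holomorphic symbol `conj (e^{z₂}) = e^{z̄₂}` therefore shifts
the evaluation point `w₂` to `w₂ + 1`, and the factor `e^{2πi z₂}` does not see this shift. -/

open Polynomial

section
variable {V : Type*} [NormedAddCommGroup V] [InnerProductSpace ℝ V] [FiniteDimensional ℝ V]
  [MeasurableSpace V] [BorelSpace V]

theorem integrable_rexp_neg_mul_sq_norm {b : ℝ} (hb : 0 < b) :
    Integrable (fun v : V => Real.exp (-b * ‖v‖ ^ 2)) := by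
  have := (GaussianFourier.integrable_cexp_neg_mul_sq_norm_add (V := V) (b := b)
    (by simpa using hb) 0 0).norm
  simpa [norm_exp, ← ofReal_pow] using this

theorem pow_mul_rexp_mul_sub_sq_le (m : ℕ) (C : ℝ) {t : ℝ} (ht : 0 ≤ t) :
    t ^ m * Real.exp (C * t - t ^ 2)
      ≤ m.factorial * Real.exp ((C + 1) ^ 2 / 2) * Real.exp (-(1 / 2) * t ^ 2) := by
  have hpow : t ^ m ≤ m.factorial * Real.exp t := by
    have := Real.pow_div_factorial_le_exp t ht m
    rwa [div_le_iff₀ (by positivity), mul_comm] at this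
  calc t ^ m * Real.exp (C * t - t ^ 2)
      ≤ m.factorial * Real.exp t * Real.exp (C * t - t ^ 2) := by gcongr
    _ = m.factorial * Real.exp ((C + 1) * t - t ^ 2) := by
        rw [mul_assoc, ← Real.exp_add]; ring_nf
    _ ≤ m.factorial * Real.exp ((C + 1) ^ 2 / 2 + -(1 / 2) * t ^ 2) := by
        gcongr
        nlinarith [sq_nonneg (t - (C + 1))]
    _ = _ := by rw [Real.exp_add, mul_assoc]

theorem integrable_pow_norm_mul_rexp_mul_norm_sub_sq_norm (m : ℕ) (C : ℝ) :
    Integrable (fun v : V => ‖v‖ ^ m * Real.exp (C * ‖v‖ - ‖v‖ ^ 2)) := by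
  refine ((integrable_rexp_neg_mul_sq_norm (V := V) (one_half_pos)).const_mul
    (m.factorial * Real.exp ((C + 1) ^ 2 / 2))).mono' (by fun_prop) ?_
  filter_upwards with v
  rw [Real.norm_of_nonneg (by positivity)]
  exact pow_mul_rexp_mul_sub_sq_le m C (norm_nonneg v)

end

-- `π⁻¹ * gaussianExp a b z` is the density of `e^{az + b z̄} dμ(z)`, `μ` the Gaussian measure.
noncomputable def gaussianExp (a b z : ℂ) : ℂ := cexp (a * z + b * conj z - ‖z‖ ^ 2)

theorem norm_pow_mul_gaussianExp_le (m : ℕ) (a b z : ℂ) :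
    ‖z ^ m * gaussianExp a b z‖ ≤ ‖z‖ ^ m * Real.exp ((‖a‖ + ‖b‖) * ‖z‖ - ‖z‖ ^ 2) := by
  have hre : (a * z + b * conj z).re ≤ (‖a‖ + ‖b‖) * ‖z‖ :=
    calc (a * z + b * conj z).re ≤ ‖a * z + b * conj z‖ := re_le_norm _
      _ ≤ ‖a * z‖ + ‖b * conj z‖ := norm_add_le _ _
      _ = (‖a‖ + ‖b‖) * ‖z‖ := by rw [norm_mul, norm_mul, norm_conj]; ring
  rw [gaussianExp, norm_mul, norm_pow, norm_exp, sub_re, ← ofReal_pow, ofReal_re]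
  gcongr

theorem continuous_pow_mul_gaussianExp (m : ℕ) (a b : ℂ) :
    Continuous (fun z : ℂ => z ^ m * gaussianExp a b z) := by
  unfold gaussianExp
  fun_prop

theorem integrable_pow_mul_gaussianExp (m : ℕ) (a b : ℂ) :
    Integrable (fun z : ℂ => z ^ m * gaussianExp a b z) :=
  (integrable_pow_norm_mul_rexp_mul_norm_sub_sq_norm m _).mono'
    (continuous_pow_mul_gaussianExp m a b).aestronglyMeasurable
    (ae_of_all _ (norm_pow_mul_gaussianExp_le m a b))

theorem hasDerivAt_gaussianExp (a b z : ℂ) :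
    HasDerivAt (fun a => gaussianExp a b z) (z * gaussianExp a b z) a := by
  have := (((hasDerivAt_id a).mul_const z).add_const (b * conj z)).sub_const
    ((‖z‖ : ℂ) ^ 2) |>.cexp
  simpa [gaussianExp, mul_comm] using this

theorem hasDerivAt_integral_pow_mul_gaussianExp (m : ℕ) (a b : ℂ) :
    HasDerivAt (fun a => ∫ z : ℂ, z ^ m * gaussianExp a b z)
      (∫ z : ℂ, z ^ (m + 1) * gaussianExp a b z) a := by
  have hbound : ∀ z : ℂ, ∀ a' ∈ Metric.ball a 1,
      ‖z ^ (m + 1) * gaussianExp a' b z‖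
        ≤ ‖z‖ ^ (m + 1) * Real.exp ((‖a‖ + 1 + ‖b‖) * ‖z‖ - ‖z‖ ^ 2) := by
    intro z a' ha'
    have ha'_norm : ‖a'‖ ≤ ‖a‖ + 1 := norm_le_norm_add_const_of_dist_le (Metric.mem_ball.mp ha').le
    refine (norm_pow_mul_gaussianExp_le _ _ _ z).trans ?_
    gcongr
  refine (hasDerivAt_integral_of_dominated_loc_of_deriv_le (Metric.ball_mem_nhds a one_pos)
    (.of_forall fun a' => (continuous_pow_mul_gaussianExp m a' b).aestronglyMeasurable)
    (integrable_pow_mul_gaussianExp m a b)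
    (continuous_pow_mul_gaussianExp (m + 1) a b).aestronglyMeasurable
    (ae_of_all _ hbound) (integrable_pow_norm_mul_rexp_mul_norm_sub_sq_norm _ _)
    (ae_of_all _ fun z a' _ => ?_)).2
  simpa [pow_succ, mul_assoc, mul_left_comm] using (hasDerivAt_gaussianExp a' b z).const_mul (z ^ m)

theorem integral_gaussianExp (a b : ℂ) : ∫ z : ℂ, gaussianExp a b z = Real.pi * cexp (a * b) := by
  have hexp (v : Fin 2 → ℝ) : gaussianExp a b (measurableEquivPi.symm v)
      = cexp (-1 * ∑ i, (v i : ℂ) ^ 2 + ∑ i, ![a + b, I * (a - b)] i * v i) := by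
    simp only [gaussianExp, measurableEquivPi_symm_apply, Fin.sum_univ_two]
    rw [← ofReal_pow, Complex.sq_norm, normSq_add_mul_I]
    congr 1
    simp only [map_add, map_mul, conj_ofReal, conj_I, Matrix.cons_val_zero, Matrix.cons_val_one]
    push_cast
    ring
  rw [← (volume_preserving_equiv_pi.symm _).integral_comp']
  simp_rw [hexp]
  rw [GaussianFourier.integral_cexp_neg_mul_sum_add one_pos, Fintype.card_fin, Fin.sum_univ_two,
    Matrix.cons_val_zero, Matrix.cons_val_one, Matrix.cons_val_zero]
  congr 1
  · norm_num
  · congr 1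
    ring_nf
    rw [I_sq]
    ring

theorem integral_pow_mul_gaussianExp (m : ℕ) (a b : ℂ) :
    ∫ z : ℂ, z ^ m * gaussianExp a b z = Real.pi * b ^ m * cexp (a * b) := by
  induction m generalizing a with
  | zero => simpa using integral_gaussianExp a b
  | succ m ih =>
    have hderiv : HasDerivAt (fun a => Real.pi * b ^ m * cexp (a * b))
        (Real.pi * b ^ (m + 1) * cexp (a * b)) a := by
      simpa [pow_succ, mul_assoc, mul_comm b] using
        (((hasDerivAt_id a).mul_const b).cexp.const_mul (Real.pi * b ^ m : ℂ))
    exact (hasDerivAt_integral_pow_mul_gaussianExp m a b).unique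
      (by simpa only [← funext ih] using hderiv)

theorem integral_eval_mul_gaussianExp (p : ℂ[X]) (a b : ℂ) :
    ∫ z : ℂ, p.eval z * gaussianExp a b z = Real.pi * p.eval b * cexp (a * b) := by
  have hterm (i : ℕ) : Integrable (fun z : ℂ => p.coeff i * z ^ i * gaussianExp a b z) := by
    simpa only [mul_assoc] using (integrable_pow_mul_gaussianExp i a b).const_mul (p.coeff i)
  simp_rw [eval_eq_sum_range, Finset.sum_mul]
  rw [integral_finsetSum _ fun i _ => hterm i, Finset.mul_sum, Finset.sum_mul]
  refine Finset.sum_congr rfl fun i _ => ?_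
  simp_rw [mul_assoc, integral_const_mul, integral_pow_mul_gaussianExp]
  ring

theorem toeplitz2_eq_of_mul_eq {φ u : ℂ × ℂ → ℂ} (p q : ℂ[X]) (a c : ℂ × ℂ)
    (h : ∀ z, φ z * u z = p.eval z.1 * q.eval z.2 *
      cexp (a.1 * z.1 + a.2 * z.2 + (c.1 * conj z.1 + c.2 * conj z.2))) (w : ℂ × ℂ) :
    toeplitz2 φ u w = p.eval (w.1 + c.1) * q.eval (w.2 + c.2) *
      cexp (a.1 * (w.1 + c.1) + a.2 * (w.2 + c.2)) := by
  have hsplit (z : ℂ × ℂ) : φ z * u z * cexp (w.1 * conj z.1 + w.2 * conj z.2) *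
      (((Real.pi ^ 2)⁻¹ * Real.exp (-(‖z.1‖ ^ 2 + ‖z.2‖ ^ 2)) : ℝ) : ℂ)
      = (Real.pi ^ 2 : ℂ)⁻¹ * ((p.eval z.1 * gaussianExp a.1 (w.1 + c.1) z.1) *
          (q.eval z.2 * gaussianExp a.2 (w.2 + c.2) z.2)) := by
    rw [h]
    push_cast
    simp only [gaussianExp, add_mul, exp_add, exp_sub, exp_neg, neg_add]
    ring
  have hπ : (Real.pi : ℂ) ≠ 0 := ofReal_ne_zero.mpr Real.pi_ne_zero
  rw [toeplitz2, integral_congr_ae (ae_of_all _ hsplit), integral_const_mul, Measure.volume_eq_prod,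
    integral_prod_mul (fun x => p.eval x * gaussianExp a.1 (w.1 + c.1) x)
      (fun y => q.eval y * gaussianExp a.2 (w.2 + c.2) y),
    integral_eval_mul_gaussianExp, integral_eval_mul_gaussianExp, exp_add]
  field_simp

theorem stmt_9 (α₁ α₂ : ℕ) (w : ℂ × ℂ) :
    (toeplitz2
        (fun z => z.1 * Complex.exp (2 * Real.pi * Complex.I * z.2) * conj (Complex.exp z.2))
        (fun z => z.1 ^ α₁ * z.2 ^ α₂) w
      = w.1 * Complex.exp (2 * Real.pi * Complex.I * w.2) * (w.1 ^ α₁ * (w.2 + 1) ^ α₂)) ∧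
    (toeplitz2 (fun z => conj (Complex.exp z.2)) (fun z => z.1 ^ α₁ * z.2 ^ α₂) w
      = w.1 ^ α₁ * (w.2 + 1) ^ α₂) ∧
    (toeplitz2 (fun z => z.1 * Complex.exp (2 * Real.pi * Complex.I * z.2))
        (fun z => toeplitz2 (fun x => conj (Complex.exp x.2))
          (fun x => x.1 ^ α₁ * x.2 ^ α₂) z) w
      = toeplitz2
          (fun z => z.1 * Complex.exp (2 * Real.pi * Complex.I * z.2) * conj (Complex.exp z.2))
          (fun z => z.1 ^ α₁ * z.2 ^ α₂) w) := by
  have hconj (w : ℂ × ℂ) :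
      toeplitz2 (fun z => conj (cexp z.2)) (fun z => z.1 ^ α₁ * z.2 ^ α₂) w
        = w.1 ^ α₁ * (w.2 + 1) ^ α₂ := by
    rw [toeplitz2_eq_of_mul_eq (X ^ α₁) (X ^ α₂) 0 (0, 1) (fun z => ?_) w]
    · simp only [eval_pow, eval_X, Prod.fst_zero, Prod.snd_zero, zero_mul, add_zero, exp_zero,
        mul_one]
    · simp only [← exp_conj, eval_pow, eval_X, Prod.fst_zero, Prod.snd_zero, zero_mul, zero_add,
        one_mul]
      ring
  have hperiodic : cexp (2 * Real.pi * I * (w.2 + 1)) = cexp (2 * Real.pi * I * w.2) := by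
    rw [mul_add, mul_one, exp_add, exp_two_pi_mul_I, mul_one]
  have hprod : toeplitz2 (fun z => z.1 * cexp (2 * Real.pi * I * z.2) * conj (cexp z.2))
      (fun z => z.1 ^ α₁ * z.2 ^ α₂) w
        = w.1 * cexp (2 * Real.pi * I * w.2) * (w.1 ^ α₁ * (w.2 + 1) ^ α₂) := by
    refine (toeplitz2_eq_of_mul_eq (X ^ (α₁ + 1)) (X ^ α₂) (0, 2 * Real.pi * I) (0, 1)
      (fun z => ?_) w).trans ?_ <;>
      simp only [← exp_conj, eval_pow, eval_X, zero_mul, zero_add, add_zero, one_mul, exp_add,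
        hperiodic] <;> ring
  refine ⟨hprod, hconj w, ?_⟩
  rw [hprod, funext hconj]
  refine (toeplitz2_eq_of_mul_eq (X ^ (α₁ + 1)) ((X + 1) ^ α₂) (0, 2 * Real.pi * I) 0
    (fun z => ?_) w).trans ?_ <;>
    simp only [eval_pow, eval_X, eval_add, eval_one, Prod.fst_zero, Prod.snd_zero, zero_mul,
      zero_add, add_zero] <;> ring
end

section
/- Pluriharmonic Berezin fixed point in ℂ²: let p be a holomorphic polynomial on ℂ² with p(z₁,z₂) = p(z₁,0) (p depends only on z₁), let f(z) = e^{2πi z₂} and g(z) = e^{z₂}. Then B[p f conj(g)](z) = p(z) f(z) conj(g(z)) for all z ∈ ℂ²; i.e., p f conj(g) is a fixed point of the Berezin transform even though p may be non-constant. -/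
open MeasureTheory Complex ComplexConjugate

/-!
The weight `e^{w·z̄ + z·w̄ - |w|²}` splits over the two coordinates, so by Fubini the Berezin
integral is a product of two integrals over `ℂ`. In `w₁` it is the mean of `p` against a Gaussian
centred at `z₁`, which is `π p(z₁) e^{|z₁|²}`: after translating, every monomial `uᵐ` with `m ≠ 0`
has Gaussian mean zero by rotation invariance. In `w₂` it is the complex Gaussian integral
`∫ exp(a w + b w̄ - |w|²) = π e^{ab}` with `a = 2πi + z̄₂`, `b = 1 + z₂`; the constant term of `ab`
is `2πi`, and `e^{2πi} = 1` is what makes `p f ḡ` a fixed point.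
-/

theorem integral_cexp_mul_add_mul_conj_sub_sq_norm (a b : ℂ) :
    ∫ w : ℂ, cexp (a * w + b * conj w - ((‖w‖ ^ 2 : ℝ) : ℂ)) = Real.pi * cexp (a * b) := by
  rw [← volume_preserving_equiv_pi.symm.integral_comp
    measurableEquivPi.symm.measurableEmbedding]
  have hexp (v : Fin 2 → ℝ) :
      a * measurableEquivPi.symm v + b * conj (measurableEquivPi.symm v)
          - ((‖measurableEquivPi.symm v‖ ^ 2 : ℝ) : ℂ)
        = -1 * ∑ i, (v i : ℂ) ^ 2 + ∑ i, ![a + b, (a - b) * I] i * v i := by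
    rw [measurableEquivPi_symm_apply, ← mk_eq_add_mul_I, Complex.sq_norm, normSq_mk]
    simp only [Fin.sum_univ_two, map_add, map_mul, conj_ofReal, conj_I, Matrix.cons_val_zero,
      Matrix.cons_val_one, mk_eq_add_mul_I]
    push_cast
    ring
  simp_rw [hexp]
  rw [GaussianFourier.integral_cexp_neg_mul_sum_add (by norm_num) _]
  simp only [Fin.sum_univ_two, Matrix.cons_val_zero, Matrix.cons_val_one, Fintype.card_fin,
    div_one]
  congr 1
  · norm_num
  · congr 1
    linear_combination (a - b) ^ 2 / 4 * I_sq

theorem integrable_pow_mul_cexp_neg_sq_norm (m : ℕ) :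
    Integrable (fun u : ℂ => u ^ m * cexp (-((‖u‖ ^ 2 : ℝ) : ℂ))) := by
  have hgauss : Integrable (fun u : ℂ => Real.exp (-(1 / 2) * ‖u‖ ^ 2)) := by
    simpa [← ofReal_pow, ← ofReal_neg, ← ofReal_mul, ← ofReal_ofNat, ← ofReal_div, norm_exp] using
      (GaussianFourier.integrable_cexp_neg_mul_sq_norm_add (V := ℂ) (b := 1 / 2)
        (by norm_num) 0 0).norm
  refine (hgauss.const_mul (m.factorial * Real.exp (1 / 2))).mono' (by fun_prop)
    (Filter.Eventually.of_forall fun u => ?_)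
  rw [norm_mul, norm_pow, norm_exp, ← ofReal_neg, ofReal_re]
  have hpow : ‖u‖ ^ m ≤ m.factorial * Real.exp ‖u‖ := by
    have := Real.pow_div_factorial_le_exp _ (norm_nonneg u) m
    rwa [div_le_iff₀' (by positivity)] at this
  calc ‖u‖ ^ m * Real.exp (-‖u‖ ^ 2)
      ≤ m.factorial * Real.exp ‖u‖ * Real.exp (-‖u‖ ^ 2) := by gcongr
    _ = m.factorial * Real.exp (‖u‖ - ‖u‖ ^ 2) := by rw [mul_assoc, ← Real.exp_add, sub_eq_add_neg]
    _ ≤ m.factorial * Real.exp (1 / 2 + -(1 / 2) * ‖u‖ ^ 2) := by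
        gcongr
        nlinarith [sq_nonneg (‖u‖ - 1)]
    _ = _ := by rw [Real.exp_add, mul_assoc]

theorem integral_pow_mul_radial_eq_zero {m : ℕ} (hm : m ≠ 0) (g : ℝ → ℂ) :
    ∫ u : ℂ, u ^ m * g ‖u‖ = 0 := by
  set c : Circle := Circle.exp (Real.pi / m)
  have hcm : (c : ℂ) ^ m = -1 := by
    rw [Circle.coe_exp, ← Complex.exp_nat_mul, ← exp_pi_mul_I]
    congr 1
    push_cast
    field_simp
  have hrot := (rotation c).measurePreserving.integral_comp
    (rotation c).toHomeomorph.measurableEmbedding (fun u : ℂ => u ^ m * g ‖u‖)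
  simp only [rotation_apply, mul_pow, norm_mul, Circle.norm_coe, one_mul, hcm, mul_assoc,
    integral_const_mul] at hrot
  linear_combination -hrot / 2

theorem integral_eval_mul_cexp_neg_sq_norm (q : Polynomial ℂ) :
    ∫ u : ℂ, q.eval u * cexp (-((‖u‖ ^ 2 : ℝ) : ℂ)) = Real.pi * q.eval 0 := by
  have hmonomial (i : ℕ) :
      ∫ u : ℂ, u ^ i * cexp (-((‖u‖ ^ 2 : ℝ) : ℂ)) = if i = 0 then (Real.pi : ℂ) else 0 := by
    split_ifs with hi
    · subst hi
      simpa using integral_cexp_mul_add_mul_conj_sub_sq_norm 0 0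
    · exact integral_pow_mul_radial_eq_zero hi fun r => cexp (-((r ^ 2 : ℝ) : ℂ))
  simp_rw [q.eval_eq_sum_range, Finset.sum_mul, mul_assoc]
  rw [integral_finsetSum _ fun i _ => (integrable_pow_mul_cexp_neg_sq_norm i).const_mul _]
  simp_rw [integral_const_mul, hmonomial, mul_ite, mul_zero, Finset.sum_ite_eq',
    Finset.mem_range, Nat.zero_lt_succ, if_true]
  rw [← q.eval_eq_sum_range, ← Polynomial.coeff_zero_eq_eval_zero, mul_comm]

-- The exponent is `‖z‖² - ‖w - z‖²`.
theorem integral_eval_mul_translated_gaussian (p : Polynomial ℂ) (z : ℂ) :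
    ∫ w : ℂ, p.eval w * cexp (w * conj z + z * conj w - ((‖w‖ ^ 2 : ℝ) : ℂ))
      = Real.pi * p.eval z * cexp ((‖z‖ ^ 2 : ℝ) : ℂ) := by
  have hshift (u : ℂ) :
      p.eval (u + z) * cexp ((u + z) * conj z + z * conj (u + z) - ((‖u + z‖ ^ 2 : ℝ) : ℂ))
        = cexp ((‖z‖ ^ 2 : ℝ) : ℂ) *
          ((p.comp (Polynomial.X + Polynomial.C z)).eval u * cexp (-((‖u‖ ^ 2 : ℝ) : ℂ))) := by
    simp only [ofReal_pow, ← mul_conj', Polynomial.eval_comp, Polynomial.eval_add,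
      Polynomial.eval_X, Polynomial.eval_C, map_add, mul_left_comm (cexp _), ← exp_add]
    congr 2
    ring
  rw [← integral_add_right_eq_self _ z]
  simp_rw [hshift]
  rw [integral_const_mul, integral_eval_mul_cexp_neg_sq_norm]
  simp only [Polynomial.eval_comp, Polynomial.eval_add, Polynomial.eval_X, Polynomial.eval_C,
    zero_add]
  ring

theorem stmt_18 (p : Polynomial ℂ) :
    ∀ z : ℂ × ℂ,
      Complex.exp (-((‖z.1‖ ^ 2 + ‖z.2‖ ^ 2 : ℝ) : ℂ)) * (((Real.pi : ℂ) ^ 2)⁻¹ *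
          ∫ w : ℂ × ℂ,
            (p.eval w.1 * Complex.exp (2 * Real.pi * Complex.I * w.2) *
                conj (Complex.exp w.2)) *
              Complex.exp (w.1 * conj z.1 + w.2 * conj z.2 + z.1 * conj w.1 +
                z.2 * conj w.2 - ((‖w.1‖ ^ 2 + ‖w.2‖ ^ 2 : ℝ) : ℂ)))
        = p.eval z.1 * Complex.exp (2 * Real.pi * Complex.I * z.2) *
            conj (Complex.exp z.2) := by
  intro z
  let F (w₁ : ℂ) : ℂ := p.eval w₁ * cexp (w₁ * conj z.1 + z.1 * conj w₁ - ((‖w₁‖ ^ 2 : ℝ) : ℂ))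
  let G (w₂ : ℂ) : ℂ := cexp ((2 * Real.pi * I + conj z.2) * w₂ + (1 + z.2) * conj w₂
    - ((‖w₂‖ ^ 2 : ℝ) : ℂ))
  have hsplit (w : ℂ × ℂ) :
      (p.eval w.1 * cexp (2 * Real.pi * I * w.2) * conj (cexp w.2)) *
          cexp (w.1 * conj z.1 + w.2 * conj z.2 + z.1 * conj w.1 + z.2 * conj w.2
            - ((‖w.1‖ ^ 2 + ‖w.2‖ ^ 2 : ℝ) : ℂ))
        = F w.1 * G w.2 := by
    simp only [F, G, ← exp_conj, mul_assoc, ← exp_add]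
    push_cast
    ring_nf
  simp_rw [hsplit]
  rw [Measure.volume_eq_prod, integral_prod_mul F G,
    integral_eval_mul_translated_gaussian, integral_cexp_mul_add_mul_conj_sub_sq_norm, ← exp_conj]
  calc _ = p.eval z.1 * cexp (-((‖z.1‖ ^ 2 + ‖z.2‖ ^ 2 : ℝ) : ℂ) + ((‖z.1‖ ^ 2 : ℝ) : ℂ)
          + (2 * Real.pi * I + conj z.2) * (1 + z.2)) := by
        rw [exp_add, exp_add]
        field_simp
    _ = p.eval z.1 * cexp (2 * Real.pi * I * z.2 + conj z.2 + 2 * Real.pi * I) := by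
        simp only [ofReal_add, ofReal_pow, ← mul_conj']
        ring_nf
    _ = _ := by
        rw [exp_periodic, exp_add]
        ring
end
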